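/- The twisted Hermite functions diagonalize the harmonic oscillator under left and right twisted multiplication by H(q,p) := (q²+p²)/2: for all m, n ∈ ℕ, ½(q²+p²)·f_{mn} − ½(∂²f_{mn}/∂q² + ∂²f_{mn}/∂p²) + i(q·∂f_{mn}/∂p − p·∂f_{mn}/∂q) = (2m+1)·f_{mn}, and ½(q²+p²)·f_{mn} − ½(∂²f_{mn}/∂q² + ∂²f_{mn}/∂p²) − i(q·∂f_{mn}/∂p − p·∂f_{mn}/∂q) = (2n+1)·f_{mn}, pointwise on ℝ²; the left-hand sides are the differential-operator expressions for the twisted products H × f_{mn} and f_{mn} × H respectively. -/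

import Mathlib

open MeasureTheory SchwartzMap Complex

noncomputable section

def symp2 (u v : ℝ × ℝ) : ℝ := u.1 * v.2 - u.2 * v.1

def mes2 : Measure (ℝ × ℝ) := (ENNReal.ofReal (2 * Real.pi))⁻¹ • (volume : Measure (ℝ × ℝ))

def twProd2 (f g : ℝ × ℝ → ℂ) : ℝ × ℝ → ℂ := fun u =>
  ∫ s, ∫ t, f (u + s) * g (u + t) * Complex.exp (Complex.I * (symp2 s t : ℂ)) ∂mes2 ∂mes2

/-- The Gaussian `f₀(q,p) = 2 e^{-(q²+p²)/2}`. -/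
def f0 (u : ℝ × ℝ) : ℂ := 2 * Complex.exp (-((u.1 ^ 2 + u.2 ^ 2 : ℝ) : ℂ) / 2)

/-- `a = (q + ip)/√2`. -/
def aop (u : ℝ × ℝ) : ℂ := ((u.1 : ℂ) + Complex.I * (u.2 : ℂ)) / (Real.sqrt 2 : ℂ)

/-- `ā = (q - ip)/√2`. -/
def abar (u : ℝ × ℝ) : ℂ := ((u.1 : ℂ) - Complex.I * (u.2 : ℂ)) / (Real.sqrt 2 : ℂ)

/-- The twisted Hermite functions `f_{mn}`. -/
def fmn (m n : ℕ) : ℝ × ℝ → ℂ := fun u =>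
  ((Real.sqrt (2 ^ (m + n) * m.factorial * n.factorial) : ℝ) : ℂ)⁻¹ *
    ∑ k ∈ Finset.range (min m n + 1),
      (-1 : ℂ) ^ k * (m.choose k : ℂ) * (n.choose k : ℂ) * (k.factorial : ℂ) *
        2 ^ (m + n - k) * abar u ^ (m - k) * aop u ^ (n - k) * f0 u

/-- Partial derivative in the `q` direction. -/
def pdq (f : ℝ × ℝ → ℂ) : ℝ × ℝ → ℂ := fun u => fderiv ℝ f u ((1 : ℝ), (0 : ℝ))

/-- Partial derivative in the `p` direction. -/
def pdp (f : ℝ × ℝ → ℂ) : ℝ × ℝ → ℂ := fun u => fderiv ℝ f u ((0 : ℝ), (1 : ℝ))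


/-!
In the coordinates `z = q + ip`, `z̄ = q − ip` the function `f_{mn}` is, up to a constant, the sum
`∑ₖ cₖ z̄^{m−k} z^{n−k} f₀` with `cₖ = (−1)^k C(m,k) C(n,k) k!`. The operator
`H − ½Δ + σ·i(q∂_p − p∂_q)` sends the Gaussian monomial `z̄^a z^b f₀` to
`(a + b + 1 + σ(a − b)) z̄^a z^b f₀ − 2ab z̄^{a−1} z^{b−1} f₀`. Since
`cₖ (m − k)(n − k) = −(k + 1) c_{k+1}`, the lowering terms telescope against the `k`-dependence
of the diagonal terms, leaving the eigenvalue `m + n + 1 + σ(m − n)`; `σ = ±1` gives the theorem.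
-/

open Finset

section Linearity

variable {E : Type*} [NormedAddCommGroup E] [NormedSpace ℝ E]

lemma fderiv_sum_mul_apply {𝔸 ι : Type*} [NormedRing 𝔸] [NormedAlgebra ℝ 𝔸] (s : Finset ι)
    (c : ι → 𝔸) {f : ι → E → 𝔸} (hf : ∀ k ∈ s, Differentiable ℝ (f k)) (x e : E) :
    fderiv ℝ (fun y => ∑ k ∈ s, c k * f k y) x e = ∑ k ∈ s, c k * fderiv ℝ (f k) x e := by
  rw [fderiv_fun_sum fun k hk => (hf k hk x).const_mul (c k), _root_.sum_apply]
  exact sum_congr rfl fun k hk => by rw [fderiv_const_mul (hf k hk x)]; rfl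

lemma differentiable_fderiv_apply {F : Type*} [NormedAddCommGroup F] [NormedSpace ℝ F]
    {f : E → F} (hf : ContDiff ℝ 2 f) (e : E) : Differentiable ℝ (fun x => fderiv ℝ f x e) :=
  ((hf.fderiv_right (m := 1) (by norm_num)).clm_apply contDiff_const).differentiable one_ne_zero

end Linearity

lemma sum_range_mul_shift_of_recurrence {R : Type*} [CommRing R] (c t g : ℕ → R) (N : ℕ)
    (hc : ∀ k, c k * t k = -((k + 1) * c (k + 1))) (hN : c (N + 1) = 0) :
    ∑ k ∈ range (N + 1), c k * t k * g (k + 1) = -∑ k ∈ range (N + 1), k * c k * g k := by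
  have hshift := (sum_range_succ' (fun k => k * c k * g k) (N + 1)).symm.trans
    (sum_range_succ (fun k => k * c k * g k) (N + 1))
  simp only [hN, Nat.cast_zero, zero_mul, mul_zero, add_zero, Nat.cast_succ] at hshift
  rw [← hshift, ← sum_neg_distrib]
  exact sum_congr rfl fun k _ => by rw [hc]; ring

lemma sqrt_two_pow_mul_eq (N : ℕ) (x : ℝ) : √(2 ^ N * x) = √2 ^ N * √x := by
  rw [Real.sqrt_mul (by positivity), ← Real.sqrt_sq (by positivity : 0 ≤ √2 ^ N), ← pow_mul,
    mul_comm N, pow_mul, Real.sq_sqrt zero_le_two]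

namespace TwistedHermite

def z (u : ℝ × ℝ) : ℂ := u.1 + I * u.2

def zbar (u : ℝ × ℝ) : ℂ := u.1 - I * u.2

def dz : ℝ × ℝ →L[ℝ] ℂ := ofRealCLM.comp (.fst ℝ ℝ ℝ) + I • ofRealCLM.comp (.snd ℝ ℝ ℝ)

def dzbar : ℝ × ℝ →L[ℝ] ℂ := ofRealCLM.comp (.fst ℝ ℝ ℝ) - I • ofRealCLM.comp (.snd ℝ ℝ ℝ)

@[simp] lemma dz_apply (e : ℝ × ℝ) : dz e = e.1 + I * e.2 := rfl

@[simp] lemma dzbar_apply (e : ℝ × ℝ) : dzbar e = e.1 - I * e.2 := rfl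

lemma hasFDerivAt_z (u : ℝ × ℝ) : HasFDerivAt z dz u := dz.hasFDerivAt

lemma hasFDerivAt_zbar (u : ℝ × ℝ) : HasFDerivAt zbar dzbar u := dzbar.hasFDerivAt

@[fun_prop] lemma contDiff_z {n : WithTop ℕ∞} : ContDiff ℝ n z := dz.contDiff

@[fun_prop] lemma contDiff_zbar {n : WithTop ℕ∞} : ContDiff ℝ n zbar := dzbar.contDiff

lemma ofReal_fst_eq (u : ℝ × ℝ) : (u.1 : ℂ) = (zbar u + z u) / 2 := by
  simp only [z, zbar]; ring

lemma ofReal_snd_eq (u : ℝ × ℝ) : (u.2 : ℂ) = I * (zbar u - z u) / 2 := by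
  simp only [z, zbar]; ring_nf; simp [I_sq]

lemma ofReal_normSq_eq (u : ℝ × ℝ) : ((u.1 ^ 2 + u.2 ^ 2 : ℝ) : ℂ) = zbar u * z u := by
  simp only [z, zbar]; push_cast; ring_nf; simp [I_sq]

lemma abar_eq (u : ℝ × ℝ) : abar u = zbar u / ((√2 : ℝ) : ℂ) := rfl

lemma aop_eq (u : ℝ × ℝ) : aop u = z u / ((√2 : ℝ) : ℂ) := rfl

lemma f0_eq : f0 = fun u => 2 * exp (-(zbar u * z u) * (1 / 2)) := by
  funext u; simp only [f0, zbar, z]; push_cast; ring_nf; simp [I_sq]; ring_nf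

def monomial (a b : ℕ) (u : ℝ × ℝ) : ℂ := zbar u ^ a * z u ^ b * f0 u

lemma hasFDerivAt_monomial (a b : ℕ) (u : ℝ × ℝ) :
    HasFDerivAt (monomial a b)
      ((a * monomial (a - 1) b u - monomial a (b + 1) u / 2) • dzbar
        + (b * monomial a (b - 1) u - monomial (a + 1) b u / 2) • dz) u := by
  have hf0 : HasFDerivAt f0 (-(f0 u / 2) • (z u • dzbar + zbar u • dz)) u := by
    rw [f0_eq]
    refine ((((hasFDerivAt_zbar u).mul (hasFDerivAt_z u)).neg.mul_const (1 / 2)).cexp.const_mul 2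
      ).congr_fderiv ?_
    ext <;> simp <;> ring
  refine (((hasFDerivAt_zbar u).pow a).mul ((hasFDerivAt_z u).pow b)).mul hf0 |>.congr_fderiv ?_
  ext <;> simp [monomial] <;> ring

@[fun_prop] lemma differentiable_monomial (a b : ℕ) : Differentiable ℝ (monomial a b) :=
  fun u => (hasFDerivAt_monomial a b u).differentiableAt

lemma contDiff_monomial (a b : ℕ) : ContDiff ℝ 2 (monomial a b) := by
  unfold monomial; rw [f0_eq]; fun_prop

lemma fderiv_monomial_apply (a b : ℕ) (u e : ℝ × ℝ) :
    fderiv ℝ (monomial a b) u e =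
      (a * monomial (a - 1) b u - monomial a (b + 1) u / 2) * (e.1 - I * e.2)
        + (b * monomial a (b - 1) u - monomial (a + 1) b u / 2) * (e.1 + I * e.2) := by
  simp [(hasFDerivAt_monomial a b u).fderiv, mul_comm]

lemma pdq_monomial (a b : ℕ) :
    pdq (monomial a b) = fun u =>
      (a * monomial (a - 1) b u - monomial a (b + 1) u / 2)
        + (b * monomial a (b - 1) u - monomial (a + 1) b u / 2) := by
  funext u; simp [pdq, fderiv_monomial_apply]

lemma pdp_monomial (a b : ℕ) :
    pdp (monomial a b) = fun u =>
      I * ((b * monomial a (b - 1) u - monomial (a + 1) b u / 2)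
        - (a * monomial (a - 1) b u - monomial a (b + 1) u / 2)) := by
  funext u; simp [pdp, fderiv_monomial_apply]; ring

def oscillator (σ : ℂ) (f : ℝ × ℝ → ℂ) (u : ℝ × ℝ) : ℂ :=
  ((u.1 ^ 2 + u.2 ^ 2 : ℝ) : ℂ) / 2 * f u - 1 / 2 * (pdq (pdq f) u + pdp (pdp f) u)
    + σ * (I * ((u.1 : ℂ) * pdp f u - (u.2 : ℂ) * pdq f u))

lemma oscillator_sum {ι : Type*} (σ : ℂ) (s : Finset ι) (c : ι → ℂ) {f : ι → ℝ × ℝ → ℂ}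
    (hf : ∀ k ∈ s, ContDiff ℝ 2 (f k)) (u : ℝ × ℝ) :
    oscillator σ (fun x => ∑ k ∈ s, c k * f k x) u = ∑ k ∈ s, c k * oscillator σ (f k) u := by
  have h1 : ∀ k ∈ s, Differentiable ℝ (f k) := fun k hk => (hf k hk).differentiable two_ne_zero
  have h2 : ∀ k ∈ s, ∀ e, Differentiable ℝ (fun x => fderiv ℝ (f k) x e) :=
    fun k hk => differentiable_fderiv_apply (hf k hk)
  have hq : pdq (fun x => ∑ k ∈ s, c k * f k x) = fun x => ∑ k ∈ s, c k * pdq (f k) x :=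
    funext fun x => fderiv_sum_mul_apply s c h1 x _
  have hp : pdp (fun x => ∑ k ∈ s, c k * f k x) = fun x => ∑ k ∈ s, c k * pdp (f k) x :=
    funext fun x => fderiv_sum_mul_apply s c h1 x _
  have hqq : pdq (pdq (fun x => ∑ k ∈ s, c k * f k x)) u = ∑ k ∈ s, c k * pdq (pdq (f k)) u := by
    rw [hq]; exact fderiv_sum_mul_apply s c (fun k hk => h2 k hk _) u _
  have hpp : pdp (pdp (fun x => ∑ k ∈ s, c k * f k x)) u = ∑ k ∈ s, c k * pdp (pdp (f k)) u := by
    rw [hp]; exact fderiv_sum_mul_apply s c (fun k hk => h2 k hk _) u _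
  rw [oscillator, hqq, hpp, hq, hp]
  simp only [oscillator, mul_sum, ← sum_add_distrib, ← sum_sub_distrib]
  exact sum_congr rfl fun k _ => by ring

lemma oscillator_monomial (σ : ℂ) (a b : ℕ) (u : ℝ × ℝ) :
    oscillator σ (monomial a b) u
      = (a + b + 1 + σ * (a - b)) * monomial a b u - 2 * a * b * monomial (a - 1) (b - 1) u := by
  rw [oscillator, pdq_monomial, pdp_monomial, ofReal_normSq_eq, ofReal_fst_eq, ofReal_snd_eq]
  simp (disch := fun_prop) only [pdq, pdp, fderiv_monomial_apply, fderiv_fun_add, fderiv_fun_sub,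
    div_eq_mul_inv, fderiv_mul_const, fderiv_const_mul, add_apply, sub_apply, smul_apply,
    smul_eq_mul, ofReal_one, ofReal_zero]
  -- split off `a = 0` and `b = 0`, where the indices `a - 1`, `b - 1` are truncated
  rcases a with _ | a <;> rcases b with _ | b <;>
    simp only [monomial, Nat.add_sub_cancel, Nat.cast_zero, Nat.cast_succ, zero_mul, zero_sub,
      mul_zero, zero_add, sub_zero] <;>
    ring_nf <;> simp only [I_sq] <;> ring_nf

def hermiteCoeff (m n k : ℕ) : ℂ := (-1) ^ k * m.choose k * n.choose k * k.factorial

lemma hermiteCoeff_mul_sub_mul_sub (m n k : ℕ) :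
    hermiteCoeff m n k * ((m - k : ℕ) * (n - k : ℕ)) = -((k + 1) * hermiteCoeff m n (k + 1)) := by
  have hm : ((m.choose (k + 1) * (k + 1) : ℕ) : ℂ) = (m.choose k * (m - k) : ℕ) := by
    rw [Nat.choose_succ_right_eq]
  have hn : ((n.choose (k + 1) * (k + 1) : ℕ) : ℂ) = (n.choose k * (n - k) : ℕ) := by
    rw [Nat.choose_succ_right_eq]
  push_cast at hm hn
  simp only [hermiteCoeff, Nat.factorial_succ, pow_succ]
  push_cast
  linear_combination -(-1 : ℂ) ^ k * k.factorial *
    (n.choose (k + 1) * (k + 1) * hm + m.choose k * (m - k : ℕ) * hn)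

lemma hermiteCoeff_eq_zero {m n k : ℕ} (hk : min m n < k) : hermiteCoeff m n k = 0 := by
  rcases min_lt_iff.mp hk with h | h <;> simp [hermiteCoeff, Nat.choose_eq_zero_of_lt h]

lemma fmn_eq (m n : ℕ) : fmn m n = fun u => (√(m.factorial * n.factorial : ℝ) : ℂ)⁻¹ *
    ∑ k ∈ range (min m n + 1), hermiteCoeff m n k * monomial (m - k) (n - k) u := by
  funext u
  have hs : ((√2 : ℝ) : ℂ) ^ 2 = 2 := by norm_cast; exact Real.sq_sqrt zero_le_two
  have hr0 : ((√(m.factorial * n.factorial : ℝ) : ℝ) : ℂ) ≠ 0 := by norm_cast; positivity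
  rw [fmn, mul_assoc, sqrt_two_pow_mul_eq, ofReal_mul, ofReal_pow, mul_sum, mul_sum]
  refine sum_congr rfl fun k hk => ?_
  have hkm : k ≤ m := by grind
  have hkn : k ≤ n := by grind
  have h2 : (2 : ℂ) ^ (m + n - k) =
      ((√2 : ℝ) : ℂ) ^ (m + n) * ((√2 : ℝ) : ℂ) ^ (m - k) * ((√2 : ℝ) : ℂ) ^ (n - k) := by
    rw [← hs, ← pow_mul, ← pow_add, ← pow_add]; congr 1; omega
  simp only [abar_eq, aop_eq, hermiteCoeff, monomial, div_pow, h2]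
  field_simp

lemma oscillator_fmn (σ : ℂ) (m n : ℕ) (u : ℝ × ℝ) :
    oscillator σ (fmn m n) u = (m + n + 1 + σ * (m - n)) * fmn m n u := by
  set c : ℕ → ℂ := fun k => (√(m.factorial * n.factorial : ℝ) : ℂ)⁻¹ * hermiteCoeff m n k
  set g : ℕ → ℂ := fun k => monomial (m - k) (n - k) u
  have hf : fmn m n = fun u => ∑ k ∈ range (min m n + 1), c k * monomial (m - k) (n - k) u := by
    rw [fmn_eq]; simp only [mul_sum, mul_assoc, c]
  have hc : ∀ k, c k * ((m - k : ℕ) * (n - k : ℕ)) = -((k + 1) * c (k + 1)) := fun k => by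
    linear_combination (√(m.factorial * n.factorial : ℝ) : ℂ)⁻¹ * hermiteCoeff_mul_sub_mul_sub m n k
  have hN : c (min m n + 1) = 0 := by simp [c, hermiteCoeff_eq_zero]
  have hshift := sum_range_mul_shift_of_recurrence c _ g _ hc hN
  have hterm : ∀ k ∈ range (min m n + 1), c k * oscillator σ (monomial (m - k) (n - k)) u =
      (m + n + 1 + σ * (m - n)) * (c k * g k)
        - 2 * (k * c k * g k + c k * ((m - k : ℕ) * (n - k : ℕ)) * g (k + 1)) := fun k hk => by
    have hkm : k ≤ m := by grind
    have hkn : k ≤ n := by grind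
    simp only [oscillator_monomial, g, Nat.sub_sub, Nat.cast_sub hkm, Nat.cast_sub hkn]
    ring
  rw [hf, oscillator_sum _ _ _ (fun k _ => contDiff_monomial _ _), sum_congr rfl hterm]
  simp only [sum_sub_distrib, ← mul_sum, sum_add_distrib, hshift, g]
  ring

end TwistedHermite

/-- The twisted Hermite functions diagonalize the harmonic oscillator: the displayed
differential expressions are `H × f_{mn}` and `f_{mn} × H` for `H = (q²+p²)/2`. -/
theorem fmn_oscillator_eigenfunctions (m n : ℕ) (u : ℝ × ℝ) :
    (((u.1 ^ 2 + u.2 ^ 2 : ℝ) : ℂ) / 2) * fmn m n u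
        - (1 / 2) * (pdq (pdq (fmn m n)) u + pdp (pdp (fmn m n)) u)
        + Complex.I * ((u.1 : ℂ) * pdp (fmn m n) u - (u.2 : ℂ) * pdq (fmn m n) u)
      = ((2 * m + 1 : ℕ) : ℂ) * fmn m n u ∧
    (((u.1 ^ 2 + u.2 ^ 2 : ℝ) : ℂ) / 2) * fmn m n u
        - (1 / 2) * (pdq (pdq (fmn m n)) u + pdp (pdp (fmn m n)) u)
        - Complex.I * ((u.1 : ℂ) * pdp (fmn m n) u - (u.2 : ℂ) * pdq (fmn m n) u)
      = ((2 * n + 1 : ℕ) : ℂ) * fmn m n u := by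
  have hplus := TwistedHermite.oscillator_fmn 1 m n u
  have hminus := TwistedHermite.oscillator_fmn (-1) m n u
  simp only [TwistedHermite.oscillator] at hplus hminus
  simp only [Nat.cast_add, Nat.cast_mul, Nat.cast_ofNat, Nat.cast_one]
  exact ⟨by linear_combination hplus, by linear_combination hminus⟩
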